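/- Let Z ∈ ℝ^{P×P}, p ∈ ℝ^P, and let v, ṽ ∈ ℝ^P have all entries ≥ m > 0. Then ‖Z·D(v)·p − Z·D(ṽ)·p‖_q ≤ (‖Z‖_q·‖p‖_q/m²)·‖v − ṽ‖_q, where D(x) = diag(1/x_1,…,1/x_P) and q ≥ 1. -/
import Mathlib


open scoped ENNReal

/-- The ℓ_q norm of a vector in ℝ^P. -/
noncomputable def vnorm (q : ℝ≥0∞) [Fact (1 ≤ q)] {P : ℕ} (x : Fin P → ℝ) : ℝ :=
  ‖(WithLp.equiv q (Fin P → ℝ)).symm x‖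

/-- The induced (operator) matrix q-norm of a P×P real matrix. -/
noncomputable def matOpNorm (q : ℝ≥0∞) [Fact (1 ≤ q)] {P : ℕ}
    (Z : Matrix (Fin P) (Fin P) ℝ) : ℝ :=
  ‖LinearMap.toContinuousLinearMap
      ((WithLp.linearEquiv q ℝ (Fin P → ℝ)).symm.toLinearMap ∘ₗ
        Z.mulVecLin ∘ₗ (WithLp.linearEquiv q ℝ (Fin P → ℝ)).toLinearMap)‖

private lemma vnorm_mono (q : ℝ≥0∞) [Fact (1 ≤ q)] {P : ℕ} (x y : Fin P → ℝ)
    (h : ∀ i, ‖x i‖ ≤ ‖y i‖) : vnorm q x ≤ vnorm q y := by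
  unfold vnorm
  rcases eq_or_ne q ∞ with hq | hq
  · subst hq
    rw [PiLp.norm_eq_ciSup, PiLp.norm_eq_ciSup]
    cases isEmpty_or_nonempty (Fin P)
    · simp [ciSup_of_empty]
    · exact ciSup_mono (Set.Finite.bddAbove (Set.finite_range _)) fun i => h i
  · have hq' : 0 < q.toReal := ENNReal.toReal_pos (by
      have := Fact.out (p := 1 ≤ q); exact fun h0 => by simp [h0] at this) hq
    rw [PiLp.norm_eq_sum hq', PiLp.norm_eq_sum hq']
    apply Real.rpow_le_rpow (Finset.sum_nonneg fun i _ => Real.rpow_nonneg (norm_nonneg _) _)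
      (Finset.sum_le_sum fun i _ => Real.rpow_le_rpow (norm_nonneg _) (h i) hq'.le)
      (by positivity)

private lemma norm_apply_le_vnorm (q : ℝ≥0∞) [Fact (1 ≤ q)] {P : ℕ} (x : Fin P → ℝ)
    (i : Fin P) : ‖x i‖ ≤ vnorm q x := by
  unfold vnorm
  rcases eq_or_ne q ∞ with hq | hq
  · subst hq
    rw [PiLp.norm_eq_ciSup]
    exact le_ciSup (f := fun j => ‖x j‖) (Set.Finite.bddAbove (Set.finite_range _)) i
  · have hq' : 0 < q.toReal := ENNReal.toReal_pos (by
      have := Fact.out (p := 1 ≤ q); exact fun h0 => by simp [h0] at this) hq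
    rw [PiLp.norm_eq_sum hq']
    calc ‖x i‖ = (‖x i‖ ^ q.toReal) ^ (1 / q.toReal) := by
          rw [← Real.rpow_mul (norm_nonneg _), mul_one_div, div_self hq'.ne', Real.rpow_one]
      _ ≤ _ := Real.rpow_le_rpow (Real.rpow_nonneg (norm_nonneg _) _)
          (Finset.single_le_sum (fun j _ => Real.rpow_nonneg (norm_nonneg _) _) (Finset.mem_univ i))
          (by positivity)

private lemma vnorm_mulVec_le (q : ℝ≥0∞) [Fact (1 ≤ q)] {P : ℕ}
    (Z : Matrix (Fin P) (Fin P) ℝ) (w : Fin P → ℝ) :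
    vnorm q (Z.mulVec w) ≤ matOpNorm q Z * vnorm q w := by
  have h := (LinearMap.toContinuousLinearMap
      ((WithLp.linearEquiv q ℝ (Fin P → ℝ)).symm.toLinearMap ∘ₗ
        Z.mulVecLin ∘ₗ (WithLp.linearEquiv q ℝ (Fin P → ℝ)).toLinearMap)).le_opNorm
      ((WithLp.equiv q (Fin P → ℝ)).symm w)
  simpa [vnorm, matOpNorm] using h

private lemma vnorm_smul (q : ℝ≥0∞) [Fact (1 ≤ q)] {P : ℕ} (c : ℝ) (hc : 0 ≤ c)
    (w : Fin P → ℝ) : vnorm q (c • w) = c * vnorm q w := by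
  unfold vnorm
  rw [show (WithLp.equiv q (Fin P → ℝ)).symm (c • w)
      = c • (WithLp.equiv q (Fin P → ℝ)).symm w from rfl, norm_smul,
    Real.norm_of_nonneg hc]

/-- Lipschitz estimate for the Z-bus mapping: if all entries of v, ṽ are ≥ m > 0 then
‖Z D(v) p − Z D(ṽ) p‖_q ≤ (‖Z‖_q ‖p‖_q / m²) ‖v − ṽ‖_q. -/
theorem zbus_lipschitz {P : ℕ} (q : ℝ≥0∞) [Fact (1 ≤ q)]
    (Z : Matrix (Fin P) (Fin P) ℝ) (p v vt : Fin P → ℝ) (m : ℝ) (hm : 0 < m)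
    (hv : ∀ n, m ≤ v n) (hvt : ∀ n, m ≤ vt n) :
    vnorm q (Z.mulVec (fun n => p n / v n) - Z.mulVec (fun n => p n / vt n)) ≤
      matOpNorm q Z * vnorm q p / m ^ 2 * vnorm q (v - vt) := by
  set c : ℝ := vnorm q p / m ^ 2 with hc
  have hc0 : 0 ≤ c := by
    have : (0:ℝ) ≤ vnorm q p := norm_nonneg _
    positivity
  have hd : ∀ n, ‖p n / v n - p n / vt n‖ ≤ ‖(c • (v - vt)) n‖ := by
    intro n
    have hvn : 0 < v n := hm.trans_le (hv n)
    have hvtn : 0 < vt n := hm.trans_le (hvt n)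
    have key : p n / v n - p n / vt n = p n * (vt n - v n) / (v n * vt n) := by
      field_simp
    have hmm : m ^ 2 ≤ v n * vt n := by
      calc m ^ 2 = m * m := sq m
        _ ≤ v n * vt n := mul_le_mul (hv n) (hvt n) hm.le hvn.le
    rw [key, Pi.smul_apply, Pi.sub_apply]
    rw [Real.norm_eq_abs, Real.norm_eq_abs, smul_eq_mul, abs_mul, abs_of_nonneg hc0,
      abs_div, abs_mul, abs_of_pos (mul_pos hvn hvtn)]
    have h2 : |p n| ≤ vnorm q p := by
      simpa [Real.norm_eq_abs] using norm_apply_le_vnorm q p n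
    calc |p n| * |vt n - v n| / (v n * vt n) ≤ vnorm q p * |v n - vt n| / m ^ 2 := by
          rw [abs_sub_comm (vt n)]
          exact div_le_div₀ (mul_nonneg ((abs_nonneg _).trans h2) (abs_nonneg _))
            (mul_le_mul_of_nonneg_right h2 (abs_nonneg _)) (by positivity) hmm
      _ = c * |v n - vt n| := by rw [hc]; ring
  have step1 : Z.mulVec (fun n => p n / v n) - Z.mulVec (fun n => p n / vt n)
      = Z.mulVec ((fun n => p n / v n) - fun n => p n / vt n) := by
    rw [Matrix.mulVec_sub]
  rw [step1]
  calc vnorm q (Z.mulVec ((fun n => p n / v n) - fun n => p n / vt n))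
      ≤ matOpNorm q Z * vnorm q ((fun n => p n / v n) - fun n => p n / vt n) :=
        vnorm_mulVec_le q Z _
    _ ≤ matOpNorm q Z * vnorm q (c • (v - vt)) := by
        refine mul_le_mul_of_nonneg_left ?_ (norm_nonneg _)
        exact vnorm_mono q _ _ (fun n => hd n)
    _ = matOpNorm q Z * (c * vnorm q (v - vt)) := by rw [vnorm_smul q c hc0]
    _ = matOpNorm q Z * vnorm q p / m ^ 2 * vnorm q (v - vt) := by rw [hc]; ring
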